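/- arXiv:2510.19226 — 2 statements merged into one kernel-verified Lean document; each statement's English description precedes it below -/
import Mathlib

section
/- Every vector in the cone generated by the two anchors lies in the conflict-free space: for all c₁, c₂ ≥ 0, the vector g = c₁·g_eff + c₂·g_fid satisfies ⟨g, u⟩ ≥ 0 and ⟨g, v⟩ ≥ 0. -/
open Real InnerProductSpace

/-- Every vector in the cone generated by the two anchors lies in the conflict-free
space: `⟪g, u⟫ ≥ 0` and `⟪g, v⟫ ≥ 0`. -/
theorem stmt_7 {E : Type*} [NormedAddCommGroup E] [InnerProductSpace ℝ E]
    (u v : E) (hu : u ≠ 0) (hv : v ≠ 0)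
    (wf wr : ℝ) (hwf : 0 ≤ wf) (hwr : 0 ≤ wr)
    (t : E) (ht : t = wf • u + wr • v)
    (geff : E) (hgeff : geff = t - (⟪t, v⟫_ℝ / ‖v‖ ^ 2) • v)
    (gfid : E) (hgfid : gfid = t - (⟪t, u⟫_ℝ / ‖u‖ ^ 2) • u)
    (c₁ c₂ : ℝ) (hc₁ : 0 ≤ c₁) (hc₂ : 0 ≤ c₂) :
    0 ≤ ⟪c₁ • geff + c₂ • gfid, u⟫_ℝ ∧ 0 ≤ ⟪c₁ • geff + c₂ • gfid, v⟫_ℝ := by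
  have hau : (0:ℝ) < ‖u‖ ^ 2 := by
    have := norm_pos_iff.mpr hu; positivity
  have hav : (0:ℝ) < ‖v‖ ^ 2 := by
    have := norm_pos_iff.mpr hv; positivity
  have hcs := real_inner_mul_inner_self_le u v
  have hself_u : ⟪u, u⟫_ℝ = ‖u‖ ^ 2 := real_inner_self_eq_norm_sq u
  have hself_v : ⟪v, v⟫_ℝ = ‖v‖ ^ 2 := real_inner_self_eq_norm_sq v
  have hsym : ⟪v, u⟫_ℝ = ⟪u, v⟫_ℝ := real_inner_comm u v
  subst ht hgeff hgfid
  have hsimp : ∀ w : E, ⟪c₁ • (wf • u + wr • v - ((⟪wf • u + wr • v, v⟫_ℝ) / ‖v‖ ^ 2) • v) +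
      c₂ • (wf • u + wr • v - ((⟪wf • u + wr • v, u⟫_ℝ) / ‖u‖ ^ 2) • u), w⟫_ℝ =
      c₁ * ((wf * ⟪u,w⟫_ℝ + wr * ⟪v,w⟫_ℝ) - (wf * ⟪u,v⟫_ℝ + wr * ‖v‖^2) / ‖v‖^2 * ⟪v,w⟫_ℝ) +
      c₂ * ((wf * ⟪u,w⟫_ℝ + wr * ⟪v,w⟫_ℝ) - (wf * ‖u‖^2 + wr * ⟪u,v⟫_ℝ) / ‖u‖^2 * ⟪u,w⟫_ℝ) := by
    intro w
    simp only [inner_add_left, inner_sub_left, inner_smul_left, real_inner_smul_left,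
      RCLike.inner_apply, conj_trivial, hself_u, hself_v, hsym]
    try ring
  have hcs' : ⟪u, v⟫_ℝ * ⟪u, v⟫_ℝ ≤ ‖u‖ ^ 2 * ‖v‖ ^ 2 := by
    rwa [hself_u, hself_v] at hcs
  constructor
  · rw [hsimp u, hself_u, real_inner_comm v u, hsym]
    have e2 : (wf * ‖u‖^2 + wr * ⟪u,v⟫_ℝ) / ‖u‖^2 * ‖u‖^2 = wf * ‖u‖^2 + wr * ⟪u,v⟫_ℝ :=
      div_mul_cancel₀ _ hau.ne'
    rw [e2]
    apply add_nonneg _ (by simp [mul_nonneg hc₂])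
    apply mul_nonneg hc₁
    rw [sub_nonneg, div_mul_eq_mul_div, div_le_iff₀ hav]
    nlinarith
  · rw [hsimp v, hself_v, real_inner_comm v u, hsym]
    have e2 : (wf * ⟪u,v⟫_ℝ + wr * ‖v‖^2) / ‖v‖^2 * ‖v‖^2 = wf * ⟪u,v⟫_ℝ + wr * ‖v‖^2 :=
      div_mul_cancel₀ _ hav.ne'
    rw [e2]
    apply add_nonneg (by simp [mul_nonneg hc₁])
    apply mul_nonneg hc₂
    rw [sub_nonneg, div_mul_eq_mul_div, div_le_iff₀ hau]
    nlinarith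
end

section
/- Endpoint alignment of the pivot: if u and v are linearly independent and w_f > 0 and w_r > 0, then g_eff ≠ 0, g_fid ≠ 0, and the pivoted direction at full intensity γ = 1 equals the normalized efficacy anchor: cos(φ)·g_fid/‖g_fid‖ + sin(φ)·u/‖u‖ = g_eff/‖g_eff‖. -/
/-!
Both anchors are rejections: `g_fid` is the component of `t` orthogonal to `u`, and `g_eff`, the
component of `t` orthogonal to `v`, lies in the plane spanned by the orthogonal pair `g_fid`, `u`
with `u`-coefficient `w_f (1 - ⟪u, v⟫² / (‖u‖² ‖v‖²)) ≥ 0` (Cauchy–Schwarz). A unit vector in the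
plane of an orthogonal pair `a`, `b` with nonnegative `b`-component is `cos θ • â + sin θ • b̂`,
where `θ` is its angle to `a`; here `θ = φ`.
-/

open Real InnerProductSpace InnerProductGeometry

section Pivot

variable {E : Type*} [NormedAddCommGroup E] [InnerProductSpace ℝ E]

theorem cos_angle_smul_add_sin_angle_smul {a b x : E} {α β : ℝ} (hab : ⟪a, b⟫_ℝ = 0)
    (hx : x = α • a + β • b) (hβ : 0 ≤ β) (ha : a ≠ 0) (hx0 : x ≠ 0) :
    cos (angle a x) • (‖a‖⁻¹ • a) + sin (angle a x) • (‖b‖⁻¹ • b) = ‖x‖⁻¹ • x := by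
  have hba : ⟪b, a⟫_ℝ = 0 := by rw [real_inner_comm, hab]
  have ha' : ‖a‖ ≠ 0 := norm_ne_zero_iff.2 ha
  have hx' : 0 < ‖x‖ := norm_pos_iff.2 hx0
  have hpyth : ‖x‖ ^ 2 = (α * ‖a‖) ^ 2 + (β * ‖b‖) ^ 2 := by
    rw [← real_inner_self_eq_norm_sq, hx]
    simp only [inner_add_left, inner_add_right, real_inner_smul_left, real_inner_smul_right,
      hab, hba, mul_zero, add_zero, zero_add]
    rw [real_inner_self_eq_norm_sq, real_inner_self_eq_norm_sq]
    ring
  have hcos : cos (angle a x) = α * ‖a‖ / ‖x‖ := by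
    rw [cos_angle, hx, inner_add_right, real_inner_smul_right, real_inner_smul_right, hab,
      mul_zero, add_zero, real_inner_self_eq_norm_sq, ← hx]
    field_simp
  have hsin : sin (angle a x) = β * ‖b‖ / ‖x‖ := by
    refine (pow_left_inj₀ (sin_angle_nonneg a x) (by positivity) two_ne_zero).1 ?_
    rw [sin_sq, hcos]
    field_simp
    linear_combination hpyth
  rw [hcos, hsin, hx, smul_add, smul_smul, smul_smul, smul_smul, smul_smul]
  congr 1
  · congr 1
    field_simp
  · rcases eq_or_ne b 0 with rfl | hb
    · simp
    · have hb' : ‖b‖ ≠ 0 := norm_ne_zero_iff.2 hb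
      congr 1
      field_simp

noncomputable def rejection (v x : E) : E := x - (⟪x, v⟫_ℝ / ‖v‖ ^ 2) • v

theorem inner_rejection_self (v x : E) : ⟪rejection v x, v⟫_ℝ = 0 := by
  rcases eq_or_ne v 0 with rfl | hv
  · simp
  have hv' : ‖v‖ ≠ 0 := norm_ne_zero_iff.2 hv
  rw [rejection, inner_sub_left, real_inner_smul_left, real_inner_self_eq_norm_sq]
  field_simp
  ring

theorem rejection_smul (v x : E) (r : ℝ) : rejection v (r • x) = r • rejection v x := by
  simp only [rejection, real_inner_smul_left, smul_sub, smul_smul, mul_div_assoc]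

theorem rejection_add_smul_self (v x : E) (r : ℝ) : rejection v (x + r • v) = rejection v x := by
  rcases eq_or_ne v 0 with rfl | hv
  · simp
  have hv' : ‖v‖ ≠ 0 := norm_ne_zero_iff.2 hv
  have hcoeff : ⟪x + r • v, v⟫_ℝ / ‖v‖ ^ 2 = ⟪x, v⟫_ℝ / ‖v‖ ^ 2 + r := by
    rw [inner_add_left, real_inner_smul_left, real_inner_self_eq_norm_sq]
    field_simp
  rw [rejection, rejection, hcoeff]
  module

theorem rejection_ne_zero {v x : E} (h : LinearIndependent ℝ ![x, v]) : rejection v x ≠ 0 := by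
  intro h0
  exact one_ne_zero (LinearIndependent.pair_iff.1 h 1 (-(⟪x, v⟫_ℝ / ‖v‖ ^ 2))
    (by rw [← h0, rejection]; module)).1

theorem rejection_eq_smul_rejection_add_smul (v x : E) :
    rejection v x = (-(⟪x, v⟫_ℝ / ‖v‖ ^ 2)) • rejection x v
      + (1 - ⟪x, v⟫_ℝ / ‖v‖ ^ 2 * (⟪v, x⟫_ℝ / ‖x‖ ^ 2)) • x := by
  simp only [rejection]
  module

theorem inner_div_norm_sq_mul_inner_div_norm_sq_le_one (v x : E) :
    ⟪x, v⟫_ℝ / ‖v‖ ^ 2 * (⟪v, x⟫_ℝ / ‖x‖ ^ 2) ≤ 1 := by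
  rw [real_inner_comm x v, div_mul_div_comm, mul_comm (‖v‖ ^ 2), ← real_inner_self_eq_norm_sq,
    ← real_inner_self_eq_norm_sq]
  exact div_le_one_of_le₀ (real_inner_mul_inner_self_le x v)
    (mul_nonneg real_inner_self_nonneg real_inner_self_nonneg)

end Pivot

theorem stmt_10_general {E : Type*} [NormedAddCommGroup E] [InnerProductSpace ℝ E]
    (u v : E)
    (hind : LinearIndependent ℝ ![u, v])
    (wf wr : ℝ) (hwf : 0 < wf) (hwr : 0 < wr)
    (t : E) (ht : t = wf • u + wr • v)
    (geff : E) (hgeff : geff = t - (⟪t, v⟫_ℝ / ‖v‖ ^ 2) • v)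
    (gfid : E) (hgfid : gfid = t - (⟪t, u⟫_ℝ / ‖u‖ ^ 2) • u)
    (φ : ℝ) (hφ : φ = Real.arccos (⟪gfid, geff⟫_ℝ / (‖gfid‖ * ‖geff‖))) :
    geff ≠ 0 ∧ gfid ≠ 0 ∧
      Real.cos φ • (‖gfid‖⁻¹ • gfid) + Real.sin φ • (‖u‖⁻¹ • u) = ‖geff‖⁻¹ • geff := by
  have hgeff' : geff = wf • rejection v u := by
    calc geff = rejection v (wf • u + wr • v) := by rw [hgeff, ht]; rfl
      _ = wf • rejection v u := by rw [rejection_add_smul_self, rejection_smul]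
  have hgfid' : gfid = wr • rejection u v := by
    calc gfid = rejection u (wr • v + wf • u) := by rw [hgfid, ht, add_comm]; rfl
      _ = wr • rejection u v := by rw [rejection_add_smul_self, rejection_smul]
  have hgeff0 : geff ≠ 0 := hgeff' ▸ smul_ne_zero hwf.ne' (rejection_ne_zero hind)
  have hgfid0 : gfid ≠ 0 :=
    hgfid' ▸ smul_ne_zero hwr.ne' (rejection_ne_zero (LinearIndependent.pair_symm_iff.1 hind))
  have hperp : ⟪gfid, u⟫_ℝ = 0 := by
    rw [hgfid', real_inner_smul_left, inner_rejection_self, mul_zero]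
  have hdecomp : geff = (-(wf / wr * (⟪u, v⟫_ℝ / ‖v‖ ^ 2))) • gfid
      + (wf * (1 - ⟪u, v⟫_ℝ / ‖v‖ ^ 2 * (⟪v, u⟫_ℝ / ‖u‖ ^ 2))) • u := by
    rw [hgeff', hgfid', rejection_eq_smul_rejection_add_smul, smul_add, smul_smul, smul_smul,
      smul_smul]
    congr 2
    field_simp
  refine ⟨hgeff0, hgfid0, ?_⟩
  rw [hφ]
  exact cos_angle_smul_add_sin_angle_smul hperp hdecomp
    (mul_nonneg hwf.le (sub_nonneg.2 (inner_div_norm_sq_mul_inner_div_norm_sq_le_one v u)))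
    hgfid0 hgeff0

/-- Endpoint alignment of the pivot: at full intensity `γ = 1`, the pivoted direction
equals the normalized efficacy anchor. -/
theorem stmt_10 {E : Type*} [NormedAddCommGroup E] [InnerProductSpace ℝ E]
    (u v : E) (hu : u ≠ 0) (hv : v ≠ 0)
    (hind : LinearIndependent ℝ ![u, v])
    (wf wr : ℝ) (hwf : 0 < wf) (hwr : 0 < wr)
    (t : E) (ht : t = wf • u + wr • v)
    (geff : E) (hgeff : geff = t - (⟪t, v⟫_ℝ / ‖v‖ ^ 2) • v)
    (gfid : E) (hgfid : gfid = t - (⟪t, u⟫_ℝ / ‖u‖ ^ 2) • u)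
    (φ : ℝ) (hφ : φ = Real.arccos (⟪gfid, geff⟫_ℝ / (‖gfid‖ * ‖geff‖))) :
    geff ≠ 0 ∧ gfid ≠ 0 ∧
      Real.cos φ • (‖gfid‖⁻¹ • gfid) + Real.sin φ • (‖u‖⁻¹ • u) = ‖geff‖⁻¹ • geff :=
  stmt_10_general u v hind wf wr hwf hwr t ht geff hgeff gfid hgfid φ hφ
end
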